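/- Let Σ be the smallest subformula-closed set containing a formula φ and closed under prefixing □ (with ◇ primitive). Then any largest filtration of a Euclidean model M through Σ is itself Euclidean: if |w|R^l|u| and |w|R^l|v| then |u|R^l|v|. -/
import Mathlib


/-- Modal formulas with ◇ primitive. -/
inductive F : Type
  | var : Nat → F
  | neg : F → F
  | imp : F → F → F
  | dia : F → F
deriving DecidableEq

/-- □φ is defined as ¬◇¬φ. -/
def F.box (φ : F) : F := .neg (.dia (.neg φ))

/-- Kripke models. -/
structure Model where
  W : Type
  R : W → W → Prop
  V : Nat → W → Prop

/-- Standard Kripke satisfaction. -/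
def Model.sat (M : Model) : M.W → F → Prop
  | w, .var n => M.V n w
  | w, .neg φ => ¬ M.sat w φ
  | w, .imp φ ψ => M.sat w φ → M.sat w ψ
  | w, .dia φ => ∃ u, M.R w u ∧ M.sat u φ

/-- Σ is closed under subformulas. -/
def SubClosed (S : Set F) : Prop :=
  ∀ φ ∈ S, (∀ ψ, φ = F.neg ψ → ψ ∈ S) ∧
    (∀ ψ χ, φ = F.imp ψ χ → ψ ∈ S ∧ χ ∈ S) ∧
    (∀ ψ, φ = F.dia ψ → ψ ∈ S)

/-- w and u agree on all formulas of Σ. -/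
def agree (M : Model) (S : Set F) (w u : M.W) : Prop :=
  ∀ φ ∈ S, (M.sat w φ ↔ M.sat u φ)

def eqv (M : Model) (S : Set F) : Setoid M.W :=
  ⟨agree M S, ⟨fun _ _ _ => Iff.rfl, fun h φ hφ => (h φ hφ).symm,
    fun h1 h2 φ hφ => (h1 φ hφ).trans (h2 φ hφ)⟩⟩

/-- The set of equivalence classes. -/
def Cl (M : Model) (S : Set F) : Type := Quotient (eqv M S)

/-- The equivalence class |w| of w. -/
def cls (M : Model) (S : Set F) (w : M.W) : Cl M S := Quotient.mk (eqv M S) w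

/-- A filtration of M through Σ. -/
structure Filtration (M : Model) (S : Set F) where
  Rf : Cl M S → Cl M S → Prop
  Vf : Nat → Cl M S → Prop
  forth : ∀ w u : M.W, M.R w u → Rf (cls M S w) (cls M S u)
  back : ∀ w u : M.W, Rf (cls M S w) (cls M S u) →
    ∀ φ, F.dia φ ∈ S → M.sat u φ → M.sat w (F.dia φ)
  val : ∀ (w : M.W) (n : Nat), F.var n ∈ S → (Vf n (cls M S w) ↔ M.V n w)

/-- The filtration as a Kripke model. -/
def Filtration.toModel {M : Model} {S : Set F} (Fl : Filtration M S) : Model :=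
  ⟨Cl M S, Fl.Rf, Fl.Vf⟩

/-- A relation is Euclidean if wRu and wRv imply uRv. -/
def Euclidean {W : Type} (R : W → W → Prop) : Prop :=
  ∀ w u v : W, R w u → R w v → R u v

/-- The largest filtration relation. -/
def Rl (M : Model) (S : Set F) (a b : Cl M S) : Prop :=
  ∀ w u : M.W, a = cls M S w → b = cls M S u →
    ∀ φ, F.dia φ ∈ S → M.sat u φ → M.sat w (F.dia φ)

/-- If Σ is the smallest subformula-closed set containing φ and closed under prefixing □,
then the largest filtration of a Euclidean model M through Σ is itself Euclidean. -/
theorem largest_filtration_euclidean (M : Model) (φ : F) (S : Set F)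
    (hcl : SubClosed S) (hmem : φ ∈ S) (hbox : ∀ ψ ∈ S, F.box ψ ∈ S)
    (hmin : ∀ T : Set F, SubClosed T → φ ∈ T → (∀ ψ ∈ T, F.box ψ ∈ T) → S ⊆ T)
    (hE : Euclidean M.R) :
    ∀ a b c : Cl M S, Rl M S a b → Rl M S a c → Rl M S b c := by
  intro a b c hab hac u v hb hc ψ hψ hv
  obtain ⟨w, hw⟩ := Quotient.exists_rep a
  have hw' : a = cls M S w := hw.symm
  -- w ⊨ ◇ψ
  obtain ⟨x, hwx, hx⟩ := hac w v hw' hc ψ hψ hv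
  -- ◇¬◇ψ ∈ S
  have hdnd : F.dia (F.neg (F.dia ψ)) ∈ S := by
    have h1 := hbox (F.dia ψ) hψ
    exact ((hcl _ h1).1 _ rfl)
  by_contra hnu
  have hu : M.sat u (F.neg (F.dia ψ)) := hnu
  obtain ⟨y, hwy, hy⟩ := hab w u hw' hb (F.neg (F.dia ψ)) hdnd hu
  exact hy ⟨x, hE w y x hwy hwx, hx⟩
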